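/- arXiv:1710.05110 — 2 statements merged into one kernel-verified Lean document; each statement's English description precedes it below -/
import Mathlib

section
/- Let X ∈ R^{d×n}, λ > 0, S ⊆ {1..n}, and for i ∈ S let h_i(S) = 1 − x_i^T (X_S X_S^T + λI)^{-1} x_i. Writing Z_S = (X_S X_S^T + λI)^{-1}, the weighted sum Σ_{i∈S} h_i(S) · Z_{S−i} equals M·Z_S + Z_S − λ·Z_S², where M = Σ_{i∈S} h_i(S), and hence Σ_{i∈S} h_i(S) · Z_{S−i} ⪯ (M+1)·Z_S in the Loewner order. -/
/-! Sherman–Morrison, multiplied through by `h_i(S)`, gives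
`h_i(S) Z_{S−i} = h_i(S) Z_S + Z_S x_i x_iᵀ Z_S`; both Gram matrices are invertible because
`λ > 0`. Summing over `i ∈ S` and using `∑ x_i x_iᵀ = Z_S⁻¹ − λ I` collapses the rank-one terms
to `Z_S − λ Z_S²`, so the gap `(M + 1) Z_S − ∑ h_i(S) Z_{S−i}` is `λ Z_S²`, which is
positive semidefinite since `Z_S` is symmetric. -/

open Matrix

/-- The regularized Gram matrix `X_S X_Sᵀ + λ I = ∑_{i∈S} x_i x_iᵀ + λ I`. -/
noncomputable def regGram {d n : ℕ} (X : Matrix (Fin d) (Fin n) ℝ) (lam : ℝ)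
    (S : Finset (Fin n)) : Matrix (Fin d) (Fin d) ℝ :=
  ∑ i ∈ S, Matrix.vecMulVec (fun k => X k i) (fun k => X k i) + lam • 1

/-- `Z_S = (X_S X_Sᵀ + λ I)⁻¹`. -/
noncomputable def regInv {d n : ℕ} (X : Matrix (Fin d) (Fin n) ℝ) (lam : ℝ)
    (S : Finset (Fin n)) : Matrix (Fin d) (Fin d) ℝ :=
  (regGram X lam S)⁻¹

/-- `h_i(S) = 1 − x_iᵀ Z_S x_i`. -/
noncomputable def hWeight {d n : ℕ} (X : Matrix (Fin d) (Fin n) ℝ) (lam : ℝ)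
    (S : Finset (Fin n)) (i : Fin n) : ℝ :=
  1 - (fun k => X k i) ⬝ᵥ regInv X lam S *ᵥ (fun k => X k i)

namespace Matrix

variable {m R : Type*} [Fintype m] [CommRing R]

theorem vecMulVec_mul_mul_vecMulVec (u v : m → R) (B : Matrix m m R) :
    vecMulVec u v * B * vecMulVec u v = (v ⬝ᵥ B *ᵥ u) • vecMulVec u v := by
  rw [Matrix.mul_assoc, mul_vecMulVec, vecMulVec_mul_vecMulVec, vecMulVec_smul]

/-- Sherman–Morrison for a rank-one downdate, multiplied through by the denominator
`1 - vᵀ A⁻¹ u` so that it holds without dividing by it. -/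
theorem smul_inv_sub_vecMulVec [DecidableEq m] {A : Matrix m m R} (u v : m → R)
    (hA : IsUnit A.det) (hB : IsUnit (A - vecMulVec u v).det) :
    (1 - v ⬝ᵥ A⁻¹ *ᵥ u) • (A - vecMulVec u v)⁻¹
      = (1 - v ⬝ᵥ A⁻¹ *ᵥ u) • A⁻¹ + A⁻¹ * vecMulVec u v * A⁻¹ := by
  set h := 1 - v ⬝ᵥ A⁻¹ *ᵥ u
  have key : (A - vecMulVec u v) * (h • A⁻¹ + A⁻¹ * vecMulVec u v * A⁻¹) = h • 1 := by
    have hAA : A * A⁻¹ = 1 := mul_nonsing_inv A hA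
    have hrank : vecMulVec u v * A⁻¹ * vecMulVec u v * A⁻¹
        = vecMulVec u v * A⁻¹ - h • (vecMulVec u v * A⁻¹) := by
      rw [vecMulVec_mul_mul_vecMulVec, smul_mul_assoc, ← sub_sub_cancel 1 (v ⬝ᵥ A⁻¹ *ᵥ u),
        sub_smul, one_smul]
    rw [Matrix.sub_mul, Matrix.mul_add, Matrix.mul_add, mul_smul_comm, mul_smul_comm, hAA,
      ← Matrix.mul_assoc, ← Matrix.mul_assoc, ← Matrix.mul_assoc, hAA, Matrix.one_mul,
      ← Matrix.mul_assoc, hrank]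
    abel
  calc h • (A - vecMulVec u v)⁻¹ = (A - vecMulVec u v)⁻¹ * (h • 1) := by
        rw [mul_smul_comm, Matrix.mul_one]
    _ = h • A⁻¹ + A⁻¹ * vecMulVec u v * A⁻¹ := by
        rw [← key, nonsing_inv_mul_cancel_left _ _ hB]

end Matrix

section RegularizedGram

variable {d n : ℕ} (X : Matrix (Fin d) (Fin n) ℝ) {lam : ℝ}

theorem regGram_posDef (hlam : 0 < lam) (S : Finset (Fin n)) : (regGram X lam S).PosDef := by
  refine PosDef.posSemidef_add (posSemidef_sum S fun i _ => ?_) (PosDef.one.smul hlam)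
  simpa using posSemidef_vecMulVec_self_star (fun k => X k i)

theorem isUnit_det_regGram (hlam : 0 < lam) (S : Finset (Fin n)) :
    IsUnit (regGram X lam S).det :=
  (isUnit_iff_isUnit_det _).mp (regGram_posDef X hlam S).isUnit

theorem regGram_erase (lam : ℝ) {S : Finset (Fin n)} {i : Fin n} (hi : i ∈ S) :
    regGram X lam (S.erase i)
      = regGram X lam S - vecMulVec (fun k => X k i) (fun k => X k i) := by
  rw [regGram, regGram, ← Finset.add_sum_erase _ _ hi]
  abel

theorem hWeight_smul_regInv_erase (hlam : 0 < lam) {S : Finset (Fin n)} {i : Fin n}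
    (hi : i ∈ S) :
    hWeight X lam S i • regInv X lam (S.erase i)
      = hWeight X lam S i • regInv X lam S
        + regInv X lam S * vecMulVec (fun k => X k i) (fun k => X k i) * regInv X lam S := by
  have hB := isUnit_det_regGram X hlam (S.erase i)
  rw [regGram_erase X lam hi] at hB
  simp only [hWeight, regInv]
  rw [regGram_erase X lam hi]
  exact smul_inv_sub_vecMulVec _ _ (isUnit_det_regGram X hlam S) hB

theorem sum_regInv_mul_vecMulVec_mul_regInv (hlam : 0 < lam) (S : Finset (Fin n)) :
    ∑ i ∈ S, regInv X lam S * vecMulVec (fun k => X k i) (fun k => X k i) * regInv X lam S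
      = regInv X lam S - lam • (regInv X lam S * regInv X lam S) := by
  have hsum : ∑ i ∈ S, vecMulVec (fun k => X k i) (fun k => X k i)
      = regGram X lam S - lam • 1 := by
    rw [regGram, add_sub_cancel_right]
  rw [← Finset.sum_mul, ← Finset.mul_sum, hsum, Matrix.mul_sub, Matrix.mul_smul, Matrix.mul_one,
    regInv, nonsing_inv_mul _ (isUnit_det_regGram X hlam S), Matrix.sub_mul, Matrix.one_mul,
    smul_mul_assoc]

end RegularizedGram

/-- `∑_{i∈S} h_i(S) • Z_{S−i} = M • Z_S + Z_S − λ • Z_S²` where `M = ∑_{i∈S} h_i(S)`,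
and hence `∑_{i∈S} h_i(S) • Z_{S−i} ⪯ (M+1) • Z_S` in the Loewner order. -/
theorem weighted_sum_inverse_identity_and_bound
    (d n : ℕ) (X : Matrix (Fin d) (Fin n) ℝ) (lam : ℝ) (hlam : 0 < lam)
    (S : Finset (Fin n)) :
    (∑ i ∈ S, hWeight X lam S i • regInv X lam (S.erase i))
        = (∑ i ∈ S, hWeight X lam S i) • regInv X lam S + regInv X lam S
          - lam • (regInv X lam S * regInv X lam S)
    ∧ (((∑ i ∈ S, hWeight X lam S i) + 1) • regInv X lam S
        - ∑ i ∈ S, hWeight X lam S i • regInv X lam (S.erase i)).PosSemidef := by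
  set Z := regInv X lam S
  have identity : (∑ i ∈ S, hWeight X lam S i • regInv X lam (S.erase i))
      = (∑ i ∈ S, hWeight X lam S i) • Z + Z - lam • (Z * Z) := by
    rw [Finset.sum_congr rfl fun i hi => hWeight_smul_regInv_erase X hlam hi,
      Finset.sum_add_distrib, ← Finset.sum_smul, sum_regInv_mul_vecMulVec_mul_regInv X hlam,
      add_sub_assoc]
  refine ⟨identity, ?_⟩
  have hZ : Z.IsHermitian := (regGram_posDef X hlam S).inv.isHermitian
  have hZZ : (Z * Z).PosSemidef := by
    simpa only [hZ.eq] using posSemidef_conjTranspose_mul_self Z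
  rw [identity, add_smul, one_smul, sub_sub_cancel]
  exact hZZ.smul hlam.le
end

section
/- Fix S ⊆ {1..n}. Under the model y = X^T w* + ξ with E[ξ] = 0, Var[ξ] ⪯ σ²I, and λ ≤ σ²/‖w*‖², the ridge estimator ŵ_S satisfies E_ξ‖X^T(ŵ_S − w*)‖² ≤ σ²·tr(X^T (X_S X_S^T + λI)^{-1} X). -/
/-!
Write `Z = (X_S X_Sᵀ + λI)⁻¹`. The prediction error is `Xᵀ(ŵ_S − w*) = −λ XᵀZ w* + XᵀZX_S ξ`,
so for centred noise its mean square is `λ²‖XᵀZw*‖² + E‖XᵀZX_S ξ‖²`, and the variance term is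
at most `σ² tr(XᵀZX_S X_SᵀZX) = σ² (tr(XᵀZX) − λ tr(XᵀZ²X))` because `X_S X_Sᵀ = Z⁻¹ − λI`.
By Cauchy–Schwarz the bias term is at most `λ²‖w*‖² tr(XᵀZ²X) ≤ λσ² tr(XᵀZ²X)`, which the
negative part of the variance term absorbs.
-/

open Matrix MeasureTheory

/-- The ridge estimator on the subproblem `(X_S, y_S)`:
`ŵ_S = (X_S X_Sᵀ + λI)⁻¹ X_S y_S = (X_S X_Sᵀ + λI)⁻¹ ∑_{i∈S} y_i x_i`. -/
noncomputable def ridgeEst {d n : ℕ} (X : Matrix (Fin d) (Fin n) ℝ) (lam : ℝ)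
    (S : Finset (Fin n)) (y : Fin n → ℝ) : Fin d → ℝ :=
  (regGram X lam S)⁻¹ *ᵥ (∑ i ∈ S, y i • (fun k => X k i))

section dotProduct

variable {κ ι : Type*} [Fintype κ] [Fintype ι]

lemma trace_mul_transpose_self (U : Matrix κ ι ℝ) : (U * Uᵀ).trace = ∑ j, U j ⬝ᵥ U j := rfl

lemma mulVec_dotProduct_mulVec_le (M : Matrix κ ι ℝ) (w : ι → ℝ) :
    (M *ᵥ w) ⬝ᵥ (M *ᵥ w) ≤ (M * Mᵀ).trace * (w ⬝ᵥ w) := by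
  rw [trace_mul_transpose_self, Finset.sum_mul]
  refine Finset.sum_le_sum fun j _ => ?_
  simpa only [mulVec, dotProduct, sq] using Finset.sum_mul_sq_le_sq_mul_sq Finset.univ (M j) w

end dotProduct

section noise

variable {Ω ι : Type*} [Fintype ι] [MeasurableSpace Ω] {μ : Measure Ω} {ξ : Ω → ι → ℝ}

lemma integrable_dotProduct (hint : ∀ i, Integrable (fun ω => ξ ω i) μ) (v : ι → ℝ) :
    Integrable (fun ω => ξ ω ⬝ᵥ v) μ :=
  integrable_finsetSum _ fun i _ => (hint i).mul_const _

lemma integral_dotProduct_eq_zero (hint : ∀ i, Integrable (fun ω => ξ ω i) μ)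
    (hmean : ∀ i, ∫ ω, ξ ω i ∂μ = 0) (v : ι → ℝ) : ∫ ω, ξ ω ⬝ᵥ v ∂μ = 0 := by
  simp only [dotProduct]
  rw [integral_finsetSum _ fun i _ => (hint i).mul_const _]
  simp [integral_mul_const, hmean]

lemma integrable_dotProduct_sq (hint2 : ∀ i j, Integrable (fun ω => ξ ω i * ξ ω j) μ)
    (v : ι → ℝ) : Integrable (fun ω => (ξ ω ⬝ᵥ v) ^ 2) μ := by
  simp only [dotProduct, sq, Finset.sum_mul_sum]
  refine integrable_finsetSum _ fun i _ => integrable_finsetSum _ fun k _ => ?_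
  simpa only [mul_mul_mul_comm] using (hint2 i k).mul_const (v i * v k)

variable [IsProbabilityMeasure μ]

lemma integrable_add_dotProduct_sq (hint : ∀ i, Integrable (fun ω => ξ ω i) μ)
    (hint2 : ∀ i j, Integrable (fun ω => ξ ω i * ξ ω j) μ) (a : ℝ) (v : ι → ℝ) :
    Integrable (fun ω => (a + ξ ω ⬝ᵥ v) ^ 2) μ := by
  simp only [add_sq]
  exact ((integrable_const _).add ((integrable_dotProduct hint v).const_mul (2 * a))).add
    (integrable_dotProduct_sq hint2 v)

lemma integral_add_dotProduct_sq (hint : ∀ i, Integrable (fun ω => ξ ω i) μ)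
    (hint2 : ∀ i j, Integrable (fun ω => ξ ω i * ξ ω j) μ) (hmean : ∀ i, ∫ ω, ξ ω i ∂μ = 0)
    (a : ℝ) (v : ι → ℝ) :
    ∫ ω, (a + ξ ω ⬝ᵥ v) ^ 2 ∂μ = a ^ 2 + ∫ ω, (ξ ω ⬝ᵥ v) ^ 2 ∂μ := by
  have hlin := (integrable_dotProduct hint v).const_mul (2 * a)
  simp only [add_sq]
  rw [integral_add ?_ (integrable_dotProduct_sq hint2 v), integral_add (integrable_const _) hlin,
    integral_const_mul, integral_dotProduct_eq_zero hint hmean]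
  · simp
  · exact (integrable_const _).add hlin

lemma integral_sum_sq_add_mulVec_le {κ : Type*} [Fintype κ] {σ : ℝ}
    (hint : ∀ i, Integrable (fun ω => ξ ω i) μ)
    (hint2 : ∀ i j, Integrable (fun ω => ξ ω i * ξ ω j) μ) (hmean : ∀ i, ∫ ω, ξ ω i ∂μ = 0)
    (hvar : ∀ u : ι → ℝ, ∫ ω, (ξ ω ⬝ᵥ u) ^ 2 ∂μ ≤ σ ^ 2 * (u ⬝ᵥ u))
    (c : κ → ℝ) (U : Matrix κ ι ℝ) :
    ∫ ω, ∑ j, (c + U *ᵥ ξ ω) j ^ 2 ∂μ ≤ c ⬝ᵥ c + σ ^ 2 * (U * Uᵀ).trace := by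
  have hcoord : ∀ ω j, (c + U *ᵥ ξ ω) j = c j + ξ ω ⬝ᵥ U j := fun ω j => by
    rw [Pi.add_apply, mulVec, dotProduct_comm]
  simp only [hcoord]
  calc ∫ ω, ∑ j, (c j + ξ ω ⬝ᵥ U j) ^ 2 ∂μ
        = ∑ j, (c j ^ 2 + ∫ ω, (ξ ω ⬝ᵥ U j) ^ 2 ∂μ) := by
          rw [integral_finsetSum _ fun j _ => integrable_add_dotProduct_sq hint hint2 (c j) (U j)]
          simp only [integral_add_dotProduct_sq hint hint2 hmean]
    _ ≤ ∑ j, (c j ^ 2 + σ ^ 2 * (U j ⬝ᵥ U j)) := by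
          gcongr with j
          exact hvar _
    _ = c ⬝ᵥ c + σ ^ 2 * (U * Uᵀ).trace := by
          rw [Finset.sum_add_distrib, trace_mul_transpose_self, Finset.mul_sum]
          simp only [dotProduct, sq]

end noise

section restrictCols

variable {m ι : Type*} [DecidableEq ι]

/-- The paper's `X_S`, padded with zero columns outside `S` so that it keeps the shape of `X`. -/
def restrictCols (X : Matrix m ι ℝ) (S : Finset ι) : Matrix m ι ℝ :=
  of fun k i => if i ∈ S then X k i else 0

variable [Fintype ι]

lemma restrictCols_mulVec (X : Matrix m ι ℝ) (S : Finset ι) (y : ι → ℝ) :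
    restrictCols X S *ᵥ y = ∑ i ∈ S, y i • fun k => X k i := by
  ext k
  simp [restrictCols, mulVec, dotProduct, Finset.sum_apply, Finset.sum_ite_mem, mul_comm]

lemma restrictCols_mul_transpose_restrictCols (X : Matrix m ι ℝ) (S : Finset ι) :
    restrictCols X S * (restrictCols X S)ᵀ
      = ∑ i ∈ S, vecMulVec (fun k => X k i) fun k => X k i := by
  ext k l
  simp [restrictCols, mul_apply, Matrix.sum_apply, vecMulVec_apply, ite_mul, Finset.sum_ite_mem]

lemma restrictCols_mul_transpose (X : Matrix m ι ℝ) (S : Finset ι) :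
    restrictCols X S * Xᵀ = restrictCols X S * (restrictCols X S)ᵀ := by
  ext k l
  simp [restrictCols, mul_apply, ite_mul]

end restrictCols

section regGram

variable {d n : ℕ} (X : Matrix (Fin d) (Fin n) ℝ) (S : Finset (Fin n))

lemma regGram_eq_restrictCols (lam : ℝ) :
    regGram X lam S = restrictCols X S * (restrictCols X S)ᵀ + lam • 1 := by
  rw [regGram, restrictCols_mul_transpose_restrictCols]

lemma ridgeEst_eq_restrictCols (lam : ℝ) (y : Fin n → ℝ) :
    ridgeEst X lam S y = (regGram X lam S)⁻¹ *ᵥ (restrictCols X S *ᵥ y) := by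
  rw [ridgeEst, restrictCols_mulVec]

lemma isSymm_regGram (lam : ℝ) : (regGram X lam S).IsSymm := by
  simp [IsSymm, regGram_eq_restrictCols, transpose_add, transpose_mul]

variable {lam : ℝ}

lemma posDef_regGram (hlam : 0 < lam) : (regGram X lam S).PosDef := by
  rw [regGram_eq_restrictCols, ← conjTranspose_eq_transpose_of_trivial]
  exact .posSemidef_add (posSemidef_self_mul_conjTranspose _) (.smul .one hlam)

lemma inv_regGram_mul_gram (hlam : 0 < lam) :
    (regGram X lam S)⁻¹ * (restrictCols X S * (restrictCols X S)ᵀ)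
      = 1 - lam • (regGram X lam S)⁻¹ := by
  have hA := (posDef_regGram X S hlam).isUnit
  rw [eq_sub_of_add_eq (regGram_eq_restrictCols X S lam).symm, Matrix.mul_sub,
    nonsing_inv_mul _ ((isUnit_iff_isUnit_det _).mp hA), mul_smul_comm, mul_one]

lemma ridgeEst_add_sub (hlam : 0 < lam) (w : Fin d → ℝ) (e : Fin n → ℝ) :
    ridgeEst X lam S (Xᵀ *ᵥ w + e) - w
      = -lam • ((regGram X lam S)⁻¹ *ᵥ w) + (regGram X lam S)⁻¹ *ᵥ (restrictCols X S *ᵥ e) := by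
  rw [ridgeEst_eq_restrictCols, mulVec_add, mulVec_add, mulVec_mulVec, mulVec_mulVec,
    Matrix.mul_assoc, restrictCols_mul_transpose, inv_regGram_mul_gram X S hlam, sub_mulVec,
    one_mulVec, smul_mulVec, neg_smul]
  abel

lemma transpose_mul_inv_regGram_mul_restrictCols_mul_transpose (hlam : 0 < lam) :
    (Xᵀ * (regGram X lam S)⁻¹ * restrictCols X S)
        * (Xᵀ * (regGram X lam S)⁻¹ * restrictCols X S)ᵀ
      = Xᵀ * (regGram X lam S)⁻¹ * X
        - lam • ((Xᵀ * (regGram X lam S)⁻¹) * (Xᵀ * (regGram X lam S)⁻¹)ᵀ) := by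
  have hZ : ((regGram X lam S)⁻¹)ᵀ = (regGram X lam S)⁻¹ := by
    rw [transpose_nonsing_inv, (isSymm_regGram X S lam).eq]
  simp only [transpose_mul, transpose_transpose, hZ]
  calc _ = Xᵀ * ((regGram X lam S)⁻¹ * (restrictCols X S * (restrictCols X S)ᵀ))
        * (regGram X lam S)⁻¹ * X := by simp only [Matrix.mul_assoc]
    _ = _ := by
      rw [inv_regGram_mul_gram X S hlam]
      simp only [Matrix.mul_sub, Matrix.sub_mul, Matrix.mul_smul, Matrix.smul_mul,
        Matrix.mul_one, Matrix.mul_assoc]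

end regGram

/-- MSPE bound for fixed `S`: under `y = Xᵀw* + ξ`, `E[ξ]=0`, `Var[ξ] ⪯ σ²I` and
`λ ≤ σ²/‖w*‖²`, we have `E_ξ‖Xᵀ(ŵ_S − w*)‖² ≤ σ²·tr(Xᵀ(X_S X_Sᵀ + λI)⁻¹X)`. -/
theorem ridge_mspe_fixed_subset
    (d n : ℕ) (X : Matrix (Fin d) (Fin n) ℝ) (w : Fin d → ℝ) (lam σ : ℝ)
    (hlam : 0 < lam) (hreg : lam * (∑ k, w k ^ 2) ≤ σ ^ 2)
    {Ω : Type} [MeasurableSpace Ω] (μ : Measure Ω) [IsProbabilityMeasure μ]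
    (ξ : Ω → Fin n → ℝ)
    (hint : ∀ i, Integrable (fun ω => ξ ω i) μ)
    (hint2 : ∀ i j, Integrable (fun ω => ξ ω i * ξ ω j) μ)
    (hmean : ∀ i, ∫ ω, ξ ω i ∂μ = 0)
    (hvar : ∀ u : Fin n → ℝ, ∫ ω, (ξ ω ⬝ᵥ u) ^ 2 ∂μ ≤ σ ^ 2 * (u ⬝ᵥ u))
    (S : Finset (Fin n)) :
    ∫ ω, (∑ i : Fin n,
        ((Xᵀ *ᵥ fun k => ridgeEst X lam S (fun j => (Xᵀ *ᵥ w) j + ξ ω j) k - w k) i) ^ 2) ∂μ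
      ≤ σ ^ 2 * (Xᵀ * (regGram X lam S)⁻¹ * X).trace := by
  set Z := (regGram X lam S)⁻¹
  set U := Xᵀ * Z * restrictCols X S
  have herr : ∀ e : Fin n → ℝ, Xᵀ *ᵥ (ridgeEst X lam S (Xᵀ *ᵥ w + e) - w)
      = -lam • ((Xᵀ * Z) *ᵥ w) + U *ᵥ e := fun e => by
    rw [ridgeEst_add_sub X S hlam, mulVec_add, mulVec_smul, mulVec_mulVec, mulVec_mulVec,
      mulVec_mulVec]
  have hbias := mulVec_dotProduct_mulVec_le (Xᵀ * Z) w
  have hw : w ⬝ᵥ w = ∑ k, w k ^ 2 := by simp only [dotProduct, sq]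
  rw [hw] at hbias
  have htrace : 0 ≤ ((Xᵀ * Z) * (Xᵀ * Z)ᵀ).trace := by
    rw [← conjTranspose_eq_transpose_of_trivial]
    exact (posSemidef_self_mul_conjTranspose _).trace_nonneg
  calc _ = ∫ ω, ∑ j, (-lam • ((Xᵀ * Z) *ᵥ w) + U *ᵥ ξ ω) j ^ 2 ∂μ := by simp only [← herr]; rfl
    _ ≤ _ := integral_sum_sq_add_mulVec_le hint hint2 hmean hvar _ _
    _ = lam ^ 2 * (((Xᵀ * Z) *ᵥ w) ⬝ᵥ ((Xᵀ * Z) *ᵥ w))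
          + σ ^ 2 * ((Xᵀ * Z * X).trace - lam * ((Xᵀ * Z) * (Xᵀ * Z)ᵀ).trace) := by
        rw [transpose_mul_inv_regGram_mul_restrictCols_mul_transpose X S hlam, trace_sub,
          trace_smul, smul_dotProduct, dotProduct_smul]
        simp only [smul_eq_mul]
        ring
    _ ≤ σ ^ 2 * (Xᵀ * Z * X).trace := by
        linarith [mul_le_mul_of_nonneg_left hbias (sq_nonneg lam),
          mul_le_mul_of_nonneg_left hreg (mul_nonneg hlam.le htrace)]
end
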